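/- In the assignment model: there exists an optimal solution (π°, μ°, p°) to the dual linear program D(N,∅) that is the largest element of the lattice of optimal dual solutions, i.e., every optimal dual solution (π, μ, p) satisfies π° ≤ π, μ ≤ μ°, and p ≤ p° componentwise; moreover, at this solution μ°_i equals agent i's VCG raise V_ℓ(N) − V_ℓ(N∖{i}) for every i ∈ N. -/

import Mathlib

open Finset

variable {N M : Type*}

/-- A matching: a set of agent–item pairs in which each agent and each item
appears at most once. -/
def IsMatching (x : Finset (N × M)) : Prop :=
  (∀ p ∈ x, ∀ q ∈ x, p.1 = q.1 → p = q) ∧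
  (∀ p ∈ x, ∀ q ∈ x, p.2 = q.2 → p = q)

/-- `r` is the value `V(S,T)` in the assignment model: the maximum of the total bid over
matchings in which every matched agent lies in `S ∪ T` and every agent of `T` is matched. -/
def AVal [DecidableEq N] (b : N → M → ℝ) (S T : Finset N) (r : ℝ) : Prop :=
  IsGreatest {r : ℝ | ∃ x : Finset (N × M), IsMatching x ∧
    (∀ p ∈ x, p.1 ∈ S ∪ T) ∧ (∀ i ∈ T, ∃ j, (i, j) ∈ x) ∧
    r = ∑ p ∈ x, b p.1 p.2} r

/-- Feasibility for the dual linear program. -/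
def DualFeasible [Fintype N] [Fintype M] (b : N → M → ℝ)
    (π μ : N → ℝ) (p : M → ℝ) : Prop :=
  (∀ i, 0 ≤ π i) ∧ (∀ i, 0 ≤ μ i) ∧ (∀ j, 0 ≤ p j) ∧
  ∀ i j, b i j - p j ≤ π i - μ i

/-- The objective of the dual linear program `D(N, ∅)`. -/
def DualObj [Fintype N] [Fintype M] (π : N → ℝ) (p : M → ℝ) : ℝ :=
  ∑ j, p j + ∑ i, π i

/-- The objective of the parametrized dual linear program `D(S, T)`. -/
def DualObjST [Fintype M] [DecidableEq N] (S T : Finset N) (π μ : N → ℝ) (p : M → ℝ) : ℝ :=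
  ∑ j, p j + ∑ i ∈ S ∪ T, π i - ∑ i ∈ T, μ i

/-- `(π, μ, p)` is an optimal solution to the dual linear program `D(N, ∅)`. -/
def DualOptimal [Fintype N] [Fintype M] (b : N → M → ℝ)
    (π μ : N → ℝ) (p : M → ℝ) : Prop :=
  DualFeasible b π μ p ∧
  ∀ π' μ' p', DualFeasible b π' μ' p' → DualObj π p ≤ DualObj π' p'

/-- The bicore `𝒞₂(N, V)` in the assignment model. -/
def AssignBicore [Fintype N] [DecidableEq N] [Fintype M] (b : N → M → ℝ)
    (π μ : N → ℝ) : Prop :=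
  (∀ i, 0 ≤ π i) ∧ (∀ i, 0 ≤ μ i) ∧
  ∀ (S T : Finset N) (rN r : ℝ), AVal b univ ∅ rN → AVal b (univ \ S) T r →
    ∑ i ∈ S, π i + ∑ j ∈ T, μ j ≤ rN - r

/-!
Since `μ` does not enter the objective, optimal solutions of `D(N, ∅)` are exactly the minimum
covers `(π, p)` of `b` (`b i j ≤ π i + p j`), paired with any feasible `μ`. Among the minimum
covers pick `(π°, p°)` with the largest `∑ p`. Moving `ε` from a set `K` of agents with `π° > 0`
to their tight neighbours shows that these neighbours outnumber `K`, even after deleting any one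
item `j` (otherwise the prices would grow). By alternating-path augmentation this Hall condition
yields a tight matching covering every agent and item of positive value (strong duality,
`V_ℓ(N) = ∑ π° + ∑ p°`), and, for an agent `i` left out of it, a tight rematching of the others
avoiding `j`, whence `V_ℓ(N \ {i}) ≥ V_ℓ(N) - p°_j + b_ij`: this is feasibility of
`μ°_i = V_ℓ(N) - V_ℓ(N \ {i})`. Conversely every feasible `μ` satisfies
`μ_i ≤ V_ℓ(N) - V_ℓ(N \ {i})` by weak duality, and for any minimum cover `(π, p)` the cover
`(π° ⊓ π, p° ⊔ p)` is again minimum, which forces `π° ≤ π` and `p ≤ p°`.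
-/

section Matching

variable {α β : Type*}

theorem isMatching_iff_injOn {x : Finset (α × β)} :
    IsMatching x ↔ Set.InjOn Prod.fst (x : Set (α × β)) ∧ Set.InjOn Prod.snd (x : Set (α × β)) :=
  Iff.rfl

theorem isMatching_empty : IsMatching (∅ : Finset (α × β)) := by
  simp [isMatching_iff_injOn]

theorem IsMatching.injOn_fst {x : Finset (α × β)} (hx : IsMatching x) :
    Set.InjOn Prod.fst (x : Set (α × β)) :=
  hx.1

theorem IsMatching.injOn_snd {x : Finset (α × β)} (hx : IsMatching x) :
    Set.InjOn Prod.snd (x : Set (α × β)) :=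
  hx.2

theorem IsMatching.mono {x y : Finset (α × β)} (hx : IsMatching x) (h : y ⊆ x) :
    IsMatching y :=
  ⟨hx.injOn_fst.mono (coe_subset.2 h), hx.injOn_snd.mono (coe_subset.2 h)⟩

theorem IsMatching.image_swap [DecidableEq α] [DecidableEq β] {x : Finset (β × α)}
    (hx : IsMatching x) : IsMatching (x.image Prod.swap) := by
  rw [isMatching_iff_injOn, coe_image]
  exact ⟨Set.InjOn.image_of_comp (f := Prod.swap) (g := Prod.fst) hx.injOn_snd,
    Set.InjOn.image_of_comp (f := Prod.swap) (g := Prod.snd) hx.injOn_fst⟩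

variable [DecidableEq α]

theorem IsMatching.card_filter_fst_mem_le {x : Finset (α × β)} (hx : IsMatching x)
    (S : Finset α) : #(x.filter (·.1 ∈ S)) ≤ #S :=
  card_le_card_of_injOn Prod.fst (fun _ hq => (mem_filter.1 hq).2)
    (hx.injOn_fst.mono (coe_subset.2 (filter_subset _ _)))

variable [DecidableEq β]

theorem IsMatching.insert {x : Finset (α × β)} (hx : IsMatching x) {a : α} {b : β}
    (ha : a ∉ x.image Prod.fst) (hb : b ∉ x.image Prod.snd) :
    IsMatching (insert (a, b) x) := by
  have hab : (a, b) ∉ (x : Set (α × β)) := fun h => ha (mem_image_of_mem Prod.fst h)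
  rw [isMatching_iff_injOn, coe_insert, Set.injOn_insert hab, Set.injOn_insert hab]
  simp only [← coe_image, mem_coe]
  exact ⟨⟨hx.1, ha⟩, ⟨hx.2, hb⟩⟩

theorem IsMatching.sum_add {x : Finset (α × β)} (hx : IsMatching x) (f : α → ℝ) (g : β → ℝ) :
    ∑ q ∈ x, (f q.1 + g q.2) = ∑ a ∈ x.image Prod.fst, f a + ∑ b ∈ x.image Prod.snd, g b := by
  rw [sum_add_distrib, sum_image hx.1, sum_image hx.2]

end Matching

theorem Finset.sum_le_sum_of_pos_imp_mem {ι : Type*} {s t : Finset ι} {g : ι → ℝ}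
    (hg : ∀ i, 0 ≤ g i) (h : ∀ i ∈ s, 0 < g i → i ∈ t) : ∑ i ∈ s, g i ≤ ∑ i ∈ t, g i := by
  classical
  calc ∑ i ∈ s, g i = ∑ i ∈ s.filter (0 < g ·), g i :=
        (sum_filter_of_ne fun i _ hi => (hg i).lt_of_ne' hi).symm
    _ ≤ ∑ i ∈ t, g i := sum_le_sum_of_subset_of_nonneg
        (fun i hi => h i (mem_filter.1 hi).1 (mem_filter.1 hi).2) fun i _ _ => hg i

theorem List.exists_nodup_isChain_of_reflTransGen {α : Type*} [DecidableEq α]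
    {r : α → α → Prop} {a b : α} (h : Relation.ReflTransGen r a b) :
    ∃ l : List α, l.IsChain r ∧ l.Nodup ∧ l.head? = some a ∧ l.getLast? = some b := by
  induction h with
  | refl => exact ⟨[a], by simp, by simp, rfl, rfl⟩
  | @tail b c _ hbc ih =>
    obtain ⟨l, hch, hnd, hhead, hlast⟩ := ih
    by_cases hc : c ∈ l
    · refine ⟨l.take (l.idxOf c + 1), hch.take _, hnd.sublist (List.take_sublist _ _),
        by simp [List.head?_take, hhead], ?_⟩
      simp [List.getLast?_take, List.getElem?_idxOf hc]
    · refine ⟨l ++ [c], ?_, ?_, by simp [List.head?_append, hhead], List.getLast?_concat⟩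
      · simp_all [List.isChain_append]
      · simpa [List.nodup_append, hnd] using fun x hx (hxc : x = c) => hc (hxc ▸ hx)

namespace Assignment

section Neighbourhood

variable {α β : Type*} [Fintype β] (G : α → β → Prop)

open scoped Classical in
noncomputable def nbhd (K : Finset α) : Finset β :=
  univ.filter fun l => ∃ k ∈ K, G k l

variable {G} in
@[simp]
theorem mem_nbhd {K : Finset α} {l : β} : l ∈ nbhd G K ↔ ∃ k ∈ K, G k l := by
  simp [nbhd]

end Neighbourhood

section Augmenting

variable {α β : Type*} [DecidableEq α] [DecidableEq β]

def reassign (x : Finset (α × β)) (k : α) (l : β) : Finset (α × β) :=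
  insert (k, l) (x.filter (·.2 ≠ l))

@[simp]
theorem mem_reassign {x : Finset (α × β)} {k : α} {l : β} {q : α × β} :
    q ∈ reassign x k l ↔ q = (k, l) ∨ q ∈ x ∧ q.2 ≠ l := by
  simp [reassign]

theorem _root_.IsMatching.reassign {x : Finset (α × β)} (hx : IsMatching x) {k : α}
    (hk : k ∉ x.image Prod.fst) (l : β) : IsMatching (reassign x k l) :=
  (hx.mono (filter_subset _ _)).insert
    (fun h => hk (image_subset_image (filter_subset _ _) h)) (by simp)

theorem forall_mem_reassign {p : α × β → Prop} {x : Finset (α × β)} {k : α} {l : β}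
    (hx : ∀ q ∈ x, p q) (hkl : p (k, l)) : ∀ q ∈ reassign x k l, p q := fun q hq => by
  rcases mem_reassign.1 hq with rfl | ⟨hq, -⟩
  exacts [hkl, hx q hq]

theorem _root_.IsMatching.notMem_image_fst_reassign {x : Finset (α × β)} (hx : IsMatching x)
    {k₀ k₁ : α} {l₁ : β} (hk₁ : (k₁, l₁) ∈ x) (hne : k₀ ≠ k₁) :
    k₁ ∉ (reassign x k₀ l₁).image Prod.fst := by
  simp only [mem_image, mem_reassign]
  rintro ⟨q, rfl | ⟨hq, hql⟩, hq1⟩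
  · exact hne hq1
  · exact hql (congrArg Prod.snd (hx.1 _ hq _ hk₁ hq1))

theorem image_snd_subset_reassign (x : Finset (α × β)) (k : α) (l : β) :
    x.image Prod.snd ⊆ (reassign x k l).image Prod.snd := by
  intro l' hl'
  obtain ⟨⟨k', l'⟩, hq, rfl⟩ := mem_image.1 hl'
  by_cases h : l' = l
  · exact mem_image.2 ⟨(k, l), by simp, h.symm⟩
  · exact mem_image.2 ⟨(k', l'), by simp [hq, h], rfl⟩

variable (G : α → β → Prop) (P : Finset α)

def AltStep (x : Finset (α × β)) (k k' : α) : Prop :=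
  k' ∈ P ∧ ∃ l, G k l ∧ (k', l) ∈ x

def HasFreeEdge (x : Finset (α × β)) (k : α) : Prop :=
  ∃ l, G k l ∧ ∀ k', (k', l) ∈ x → k' ∉ P

def Augments (x x' : Finset (α × β)) (k₀ : α) : Prop :=
  x.image Prod.fst ∩ P ⊆ x'.image Prod.fst ∧ k₀ ∈ x'.image Prod.fst ∧
    x'.image Prod.fst ⊆ insert k₀ (x.image Prod.fst) ∧ x.image Prod.snd ⊆ x'.image Prod.snd

variable {G P}

theorem augments_reassign {x : Finset (α × β)} {k₀ : α} {l : β}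
    (hl : ∀ k, (k, l) ∈ x → k ∉ P) : Augments P x (reassign x k₀ l) k₀ := by
  refine ⟨?_, mem_image.2 ⟨(k₀, l), by simp, rfl⟩, ?_, image_snd_subset_reassign x k₀ l⟩
  · intro k hk
    obtain ⟨hkx, hkP⟩ := mem_inter.1 hk
    obtain ⟨⟨k, l'⟩, hq, rfl⟩ := mem_image.1 hkx
    have hl' : l' ≠ l := by rintro rfl; exact hl k hq hkP
    exact mem_image.2 ⟨(k, l'), by simp [hq, hl'], rfl⟩
  · intro k hk
    obtain ⟨q, hq, rfl⟩ := mem_image.1 hk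
    rcases mem_reassign.1 hq with rfl | ⟨hq, -⟩
    · exact mem_insert_self _ _
    · exact mem_insert_of_mem (mem_image_of_mem _ hq)

theorem Augments.of_reassign {x x' : Finset (α × β)} (hx : IsMatching x) {k₀ k₁ : α} {l₁ : β}
    (hk₁ : (k₁, l₁) ∈ x) (hk₀P : k₀ ∈ P) (h : Augments P (reassign x k₀ l₁) x' k₁) :
    Augments P x x' k₀ := by
  obtain ⟨hkeep, hk₁', hnew, hitems⟩ := h
  refine ⟨?_, hkeep (mem_inter.2 ⟨mem_image.2 ⟨(k₀, l₁), by simp, rfl⟩, hk₀P⟩), ?_,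
    (image_snd_subset_reassign x k₀ l₁).trans hitems⟩
  · intro k hk
    obtain ⟨hkx, hkP⟩ := mem_inter.1 hk
    obtain ⟨⟨k, l'⟩, hq, rfl⟩ := mem_image.1 hkx
    by_cases hkk₁ : k = k₁
    · exact hkk₁ ▸ hk₁'
    have hl' : l' ≠ l₁ := by
      rintro rfl
      exact hkk₁ (congrArg Prod.fst (hx.2 _ hq _ hk₁ rfl))
    exact hkeep (mem_inter.2 ⟨mem_image.2 ⟨(k, l'), by simp [hq, hl'], rfl⟩, hkP⟩)
  · intro k hk
    rcases mem_insert.1 (hnew hk) with rfl | hk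
    · exact mem_insert_of_mem (mem_image_of_mem Prod.fst hk₁)
    obtain ⟨q, hq, rfl⟩ := mem_image.1 hk
    rcases mem_reassign.1 hq with rfl | ⟨hq, -⟩
    · exact mem_insert_self _ _
    · exact mem_insert_of_mem (mem_image_of_mem _ hq)

theorem exists_augments_of_isChain (L : List α) {x : Finset (α × β)} {k₀ k : α}
    (hx : IsMatching x) (hxG : ∀ q ∈ x, G q.1 q.2) (hk₀P : k₀ ∈ P)
    (hk₀x : k₀ ∉ x.image Prod.fst) (hch : (k₀ :: L).IsChain (AltStep G P x))
    (hnd : (k₀ :: L).Nodup) (hlast : (k₀ :: L).getLast? = some k)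
    (hk : HasFreeEdge G P x k) :
    ∃ x', IsMatching x' ∧ (∀ q ∈ x', G q.1 q.2) ∧ Augments P x x' k₀ := by
  induction L generalizing x k₀ with
  | nil =>
    obtain rfl : k₀ = k := by simpa using hlast
    obtain ⟨l, hGl, hl⟩ := hk
    exact ⟨reassign x k₀ l, hx.reassign hk₀x l, forall_mem_reassign hxG hGl, augments_reassign hl⟩
  | cons k₁ L ih =>
    -- Hand `l₁` from `k₁` to `k₀`; the rest of the path never returns to `k₁`, so it stays
    -- alternating for the new matching, in which `k₁` is the unmatched agent.
    obtain ⟨⟨hk₁P, l₁, hGl₁, hk₁l₁⟩, hch⟩ := List.isChain_cons_cons.1 hch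
    obtain ⟨hk₀L, hnd⟩ := List.nodup_cons.1 hnd
    have hk₁L : k₁ ∉ L := (List.nodup_cons.1 hnd).1
    have hk₀k₁ : k₀ ≠ k₁ := fun h => hk₀L (h ▸ List.mem_cons_self)
    have hl₁ : ∀ {k' l}, (k', l) ∈ x → l = l₁ → k' = k₁ := fun h hl =>
      congrArg Prod.fst (hx.2 _ h _ hk₁l₁ hl)
    have hch₁ : (k₁ :: L).IsChain (AltStep G P (reassign x k₀ l₁)) :=
      hch.imp_of_mem_tail_imp fun _ b _ hb ⟨hbP, l, hGl, hbl⟩ =>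
        ⟨hbP, l, hGl, mem_reassign.2 (Or.inr ⟨hbl, fun h => hk₁L (hl₁ hbl h ▸ hb)⟩)⟩
    have hk₁ : HasFreeEdge G P (reassign x k₀ l₁) k := by
      obtain ⟨l, hGl, hl⟩ := hk
      refine ⟨l, hGl, fun k' hk' => ?_⟩
      rcases mem_reassign.1 hk' with h | ⟨h, -⟩
      · have hll₁ : l = l₁ := (Prod.mk.inj h).2
        exact absurd hk₁P (hl k₁ (hll₁ ▸ hk₁l₁))
      · exact hl k' h
    obtain ⟨x', hx', hx'G, haug⟩ := ih (hx.reassign hk₀x l₁) (forall_mem_reassign hxG hGl₁) hk₁P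
      (hx.notMem_image_fst_reassign hk₁l₁ hk₀k₁) hch₁ hnd (by simpa using hlast) hk₁
    exact ⟨x', hx', hx'G, haug.of_reassign hx hk₁l₁ hk₀P⟩

variable [Fintype β]

theorem _root_.IsMatching.card_nbhd_lt {x : Finset (α × β)} (hx : IsMatching x) {K : Finset α}
    {k₀ : α} (hk₀ : k₀ ∈ K) (hK : ∀ k ∈ K, ∀ l, G k l → ∃ k' ∈ K, k' ≠ k₀ ∧ (k', l) ∈ x) :
    #(nbhd G K) < #K := by
  have hN : nbhd G K ⊆ (x.filter (·.1 ∈ K.erase k₀)).image Prod.snd := fun l hl => by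
    obtain ⟨k, hk, hGl⟩ := mem_nbhd.1 hl
    obtain ⟨k', hk'K, hk'k₀, hk'l⟩ := hK k hk l hGl
    exact mem_image.2 ⟨(k', l), mem_filter.2 ⟨hk'l, mem_erase.2 ⟨hk'k₀, hk'K⟩⟩, rfl⟩
  calc #(nbhd G K) ≤ #(K.erase k₀) :=
        (card_le_card hN).trans (card_image_le.trans (hx.card_filter_fst_mem_le _))
    _ < #K := card_erase_lt_of_mem hk₀

variable [Fintype α]

theorem exists_augments (hHall : ∀ K ⊆ P, #K ≤ #(nbhd G K)) {x : Finset (α × β)}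
    (hx : IsMatching x) (hxG : ∀ q ∈ x, G q.1 q.2) {k₀ : α} (hk₀P : k₀ ∈ P)
    (hk₀x : k₀ ∉ x.image Prod.fst) :
    ∃ x', IsMatching x' ∧ (∀ q ∈ x', G q.1 q.2) ∧ Augments P x x' k₀ := by
  classical
  by_cases hfree : ∃ k, Relation.ReflTransGen (AltStep G P x) k₀ k ∧ HasFreeEdge G P x k
  · obtain ⟨k, hreach, hk⟩ := hfree
    obtain ⟨l, hch, hnd, hhead, hlast⟩ := List.exists_nodup_isChain_of_reflTransGen hreach
    obtain ⟨L, rfl⟩ : ∃ L, l = k₀ :: L := ⟨l.tail, List.eq_cons_of_mem_head? hhead⟩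
    exact exists_augments_of_isChain L hx hxG hk₀P hk₀x hch hnd hlast hk
  -- Otherwise the agents reachable from `k₀` violate Hall's condition.
  set K := univ.filter (Relation.ReflTransGen (AltStep G P x) k₀)
  have hKP : K ⊆ P := fun k hk => by
    rcases Relation.ReflTransGen.cases_tail (mem_filter.1 hk).2 with rfl | ⟨_, _, hstep⟩
    exacts [hk₀P, hstep.1]
  have hclosed : ∀ k ∈ K, ∀ l, G k l → ∃ k' ∈ K, k' ≠ k₀ ∧ (k', l) ∈ x := by
    intro k hk l hGl
    have hreach := (mem_filter.1 hk).2
    obtain ⟨k', hk'l, hk'P⟩ : ∃ k', (k', l) ∈ x ∧ k' ∈ P := by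
      by_contra! h
      exact hfree ⟨k, hreach, l, hGl, h⟩
    refine ⟨k', mem_filter.2 ⟨mem_univ _, hreach.tail ⟨hk'P, l, hGl, hk'l⟩⟩, ?_, hk'l⟩
    rintro rfl
    exact hk₀x (mem_image_of_mem Prod.fst hk'l)
  exact absurd (hHall K hKP)
    (not_le.2 (hx.card_nbhd_lt (mem_filter.2 ⟨mem_univ _, .refl⟩) hclosed))

theorem exists_isMatching_cover (hHall : ∀ K ⊆ P, #K ≤ #(nbhd G K)) {x : Finset (α × β)}
    (hx : IsMatching x) (hxG : ∀ q ∈ x, G q.1 q.2) :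
    ∃ x', IsMatching x' ∧ (∀ q ∈ x', G q.1 q.2) ∧ P ⊆ x'.image Prod.fst ∧
      x'.image Prod.fst ⊆ x.image Prod.fst ∪ P ∧ x.image Prod.snd ⊆ x'.image Prod.snd := by
  induction hn : #(P \ x.image Prod.fst) using Nat.strong_induction_on generalizing x with
  | _ n ih =>
  by_cases hP : P ⊆ x.image Prod.fst
  · exact ⟨x, hx, hxG, hP, subset_union_left, Subset.rfl⟩
  obtain ⟨k₀, hk₀P, hk₀x⟩ := not_subset.1 hP
  obtain ⟨x₁, hx₁, hx₁G, hkeep, hk₀, hnew, hitems⟩ := exists_augments hHall hx hxG hk₀P hk₀x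
  have hlt : #(P \ x₁.image Prod.fst) < n := by
    rw [← hn]
    refine card_lt_card
      ⟨fun k hk => ?_, fun h => (mem_sdiff.1 (h (mem_sdiff.2 ⟨hk₀P, hk₀x⟩))).2 hk₀⟩
    obtain ⟨hkP, hkx₁⟩ := mem_sdiff.1 hk
    exact mem_sdiff.2 ⟨hkP, fun hkx => hkx₁ (hkeep (mem_inter.2 ⟨hkx, hkP⟩))⟩
  obtain ⟨x', hx', hx'G, hcov, hnew', hitems'⟩ := ih _ hlt hx₁ hx₁G rfl
  refine ⟨x', hx', hx'G, hcov, fun k hk => ?_, hitems.trans hitems'⟩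
  rcases mem_union.1 (hnew' hk) with hk | hk
  · rcases mem_insert.1 (hnew hk) with rfl | hk
    exacts [mem_union_right _ hk₀P, mem_union_left _ hk]
  · exact mem_union_right _ hk

end Augmenting

section Cover

variable {α β : Type*}

/-- A feasible point of `D(N, ∅)` with `μ = 0`. -/
def IsCover (c : α → β → ℝ) (f : α → ℝ) (g : β → ℝ) : Prop :=
  (∀ a, 0 ≤ f a) ∧ (∀ b, 0 ≤ g b) ∧ ∀ a b, c a b ≤ f a + g b

def Tight (c : α → β → ℝ) (f : α → ℝ) (g : β → ℝ) (a : α) (b : β) : Prop :=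
  f a + g b = c a b

variable [Fintype α] [Fintype β]

def IsMinCover (c : α → β → ℝ) (f : α → ℝ) (g : β → ℝ) : Prop :=
  IsCover c f g ∧ ∀ f' g', IsCover c f' g' → DualObj f g ≤ DualObj f' g'

def IsPriceMaxMinCover (c : α → β → ℝ) (f : α → ℝ) (g : β → ℝ) : Prop :=
  IsMinCover c f g ∧ ∀ f' g', IsMinCover c f' g' → ∑ b, g' b ≤ ∑ b, g b

variable {c : α → β → ℝ} {f : α → ℝ} {g : β → ℝ}

theorem IsMinCover.isCover (h : IsMinCover c f g) : IsCover c f g := h.1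

theorem IsPriceMaxMinCover.isMinCover (h : IsPriceMaxMinCover c f g) : IsMinCover c f g := h.1

omit [Fintype α] [Fintype β] in
theorem IsCover.swap (h : IsCover c f g) : IsCover (fun b a => c a b) g f :=
  ⟨h.2.1, h.1, fun b a => (h.2.2 a b).trans_eq (add_comm _ _)⟩

theorem dualObj_comm (f : α → ℝ) (g : β → ℝ) : DualObj g f = DualObj f g :=
  add_comm _ _

theorem IsMinCover.swap (h : IsMinCover c f g) : IsMinCover (fun b a => c a b) g f :=
  ⟨h.isCover.swap, fun g' f' h' =>
    (dualObj_comm f g).trans_le ((h.2 f' g' h'.swap).trans_eq (dualObj_comm f' g').symm)⟩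

theorem sum_add_le_dualObj (hf : ∀ a, 0 ≤ f a) (hg : ∀ b, 0 ≤ g b) {x : Finset (α × β)}
    (hx : IsMatching x) : ∑ q ∈ x, (f q.1 + g q.2) ≤ DualObj f g := by
  classical
  rw [hx.sum_add f g, DualObj, add_comm (∑ b, g b)]
  exact add_le_add (sum_le_sum_of_subset_of_nonneg (subset_univ _) fun a _ _ => hf a)
    (sum_le_sum_of_subset_of_nonneg (subset_univ _) fun b _ _ => hg b)

theorem IsCover.sum_le_dualObj (h : IsCover c f g) {x : Finset (α × β)} (hx : IsMatching x) :
    ∑ q ∈ x, c q.1 q.2 ≤ DualObj f g :=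
  (sum_le_sum fun q _ => h.2.2 q.1 q.2).trans (sum_add_le_dualObj h.1 h.2.1 hx)

omit [Fintype α] [Fintype β] in
theorem _root_.IsMatching.sum_eq_of_tight [DecidableEq α] [DecidableEq β] {x : Finset (α × β)}
    (hx : IsMatching x) (hT : ∀ q ∈ x, Tight c f g q.1 q.2) :
    ∑ q ∈ x, c q.1 q.2 = ∑ a ∈ x.image Prod.fst, f a + ∑ b ∈ x.image Prod.snd, g b := by
  rw [← hx.sum_add]
  exact sum_congr rfl fun q hq => (hT q hq).symm

omit [Fintype α] in
open Filter Topology in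
theorem IsCover.exists_pos_le_slack (h : IsCover c f g) {K : Finset α} (hK : ∀ k ∈ K, 0 < f k)
    {R : Finset β} (hR : nbhd (Tight c f g) K ⊆ R) :
    ∃ ε > 0, ∀ k ∈ K, ε ≤ f k ∧ ∀ l ∉ R, ε ≤ f k + g l - c k l := by
  have hslack : ∀ k ∈ K, ∀ l ∉ R, 0 < f k + g l - c k l := fun k hk l hl =>
    sub_pos.2 ((h.2.2 k l).lt_of_ne fun he => hl (hR (mem_nbhd.2 ⟨k, hk, he.symm⟩)))
  have hsmall : ∀ᶠ ε in 𝓝 (0 : ℝ), ∀ k ∈ K, ε ≤ f k ∧ ∀ l ∉ R, ε ≤ f k + g l - c k l := by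
    refine (eventually_all_finset K).2 fun k hk => (eventually_le_nhds (hK k hk)).and ?_
    refine eventually_all.2 fun l => ?_
    by_cases hl : l ∈ R
    · simp [hl]
    · exact (eventually_le_nhds (hslack k hk l hl)).mono fun _ h _ => h
  obtain ⟨ε, hεK, hε⟩ :=
    ((hsmall.filter_mono nhdsWithin_le_nhds).and (self_mem_nhdsWithin (s := Set.Ioi 0))).exists
  exact ⟨ε, hε, hεK⟩

theorem IsCover.exists_shift (h : IsCover c f g) {K : Finset α} (hK : ∀ k ∈ K, 0 < f k)
    {R : Finset β} (hR : nbhd (Tight c f g) K ⊆ R) :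
    ∃ ε > 0, ∃ f' g', IsCover c f' g' ∧ DualObj f' g' = DualObj f g - ε * #K + ε * #R ∧
      ∑ b, g' b = ∑ b, g b + ε * #R := by
  classical
  obtain ⟨ε, hε, hεK⟩ := h.exists_pos_le_slack hK hR
  refine ⟨ε, hε, fun a => f a - if a ∈ K then ε else 0, fun b => g b + if b ∈ R then ε else 0,
    ⟨fun a => ?_, fun b => ?_, fun a b => ?_⟩, ?_, ?_⟩
  · have := h.1 a
    dsimp only
    split_ifs with ha
    · linarith [(hεK a ha).1]
    · linarith
  · have := h.2.1 b
    dsimp only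
    split_ifs <;> linarith
  · have := h.2.2 a b
    dsimp only
    split_ifs with ha hb hb
    · linarith
    · linarith [(hεK a ha).2 b hb]
    · linarith
    · linarith
  · simp only [DualObj, sum_add_distrib, sum_sub_distrib, sum_ite_mem, univ_inter, sum_const,
      nsmul_eq_mul]
    ring
  · simp only [sum_add_distrib, sum_ite_mem, univ_inter, sum_const, nsmul_eq_mul]
    ring

theorem IsMinCover.card_le_card_nbhd (h : IsMinCover c f g) {K : Finset α}
    (hK : ∀ k ∈ K, 0 < f k) : #K ≤ #(nbhd (Tight c f g) K) := by
  obtain ⟨ε, hε, f', g', hc, hval, -⟩ := h.isCover.exists_shift hK Subset.rfl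
  have := h.2 f' g' hc
  rw [hval] at this
  have : (#K : ℝ) ≤ #(nbhd (Tight c f g) K) := le_of_mul_le_mul_left (by linarith) hε
  exact_mod_cast this

/-- If `#K` items sufficed for the tight neighbours of `K` together with `j`, shifting `ε`
from `K` to them would give a minimum cover with larger prices. -/
theorem IsPriceMaxMinCover.card_le_card_nbhd_ne [DecidableEq β] (h : IsPriceMaxMinCover c f g)
    {K : Finset α} (hK : ∀ k ∈ K, 0 < f k) (j : β) :
    #K ≤ #(nbhd (fun a b => Tight c f g a b ∧ b ≠ j) K) := by
  set R := insert j (nbhd (fun a b => Tight c f g a b ∧ b ≠ j) K)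
  have hR : nbhd (Tight c f g) K ⊆ R := fun l hl => by
    obtain ⟨k, hk, hT⟩ := mem_nbhd.1 hl
    by_cases hlj : l = j
    · exact hlj ▸ mem_insert_self _ _
    · exact mem_insert_of_mem (mem_nbhd.2 ⟨k, hk, hT, hlj⟩)
  obtain ⟨ε, hε, f', g', hc, hval, hsum⟩ := h.isMinCover.isCover.exists_shift hK hR
  have hlt : #K < #R := by
    by_contra! hle
    have hmin : IsMinCover c f' g' := ⟨hc, fun f'' g'' h'' => by
      have := h.isMinCover.2 f'' g'' h''
      have : ε * #R ≤ ε * #K := by gcongr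
      linarith⟩
    have := h.2 f' g' hmin
    have : (0 : ℝ) < #R := Nat.cast_pos.2 (card_pos.2 ⟨j, mem_insert_self _ _⟩)
    nlinarith
  have : #R ≤ #(nbhd (fun a b => Tight c f g a b ∧ b ≠ j) K) + 1 := card_insert_le _ _
  omega

end Cover

section Duality

variable {α β : Type*} [Fintype α] [Fintype β] [DecidableEq α] [DecidableEq β]
  {c : α → β → ℝ} {f : α → ℝ} {g : β → ℝ}

theorem IsMinCover.exists_tight_cover_of_pos (h : IsMinCover c f g) {x : Finset (α × β)}
    (hx : IsMatching x) (hxT : ∀ q ∈ x, Tight c f g q.1 q.2) :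
    ∃ x', IsMatching x' ∧ (∀ q ∈ x', Tight c f g q.1 q.2) ∧
      (∀ a, 0 < f a → a ∈ x'.image Prod.fst) ∧ x.image Prod.snd ⊆ x'.image Prod.snd := by
  obtain ⟨x', hx', hx'T, hP, -, hitems⟩ := exists_isMatching_cover (P := univ.filter (0 < f ·))
    (fun K hK => h.card_le_card_nbhd fun k hk => (mem_filter.1 (hK hk)).2) hx hxT
  exact ⟨x', hx', hx'T, fun a ha => hP (by simpa using ha), hitems⟩

theorem IsMinCover.exists_tight_cover (h : IsMinCover c f g) :
    ∃ x, IsMatching x ∧ (∀ q ∈ x, Tight c f g q.1 q.2) ∧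
      (∀ a, 0 < f a → a ∈ x.image Prod.fst) ∧ (∀ b, 0 < g b → b ∈ x.image Prod.snd) := by
  obtain ⟨y, hy, hyT, hgy, -⟩ := h.swap.exists_tight_cover_of_pos isMatching_empty (by simp)
  obtain ⟨x, hx, hxT, hfx, hyx⟩ := h.exists_tight_cover_of_pos hy.image_swap (by
    simp only [mem_image, forall_exists_index, and_imp]
    rintro _ q hq rfl
    exact (add_comm _ _).trans (hyT q hq))
  refine ⟨x, hx, hxT, hfx, fun b hb => hyx ?_⟩
  obtain ⟨q, hq, rfl⟩ := mem_image.1 (hgy b hb)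
  exact mem_image.2 ⟨q.swap, mem_image_of_mem _ hq, rfl⟩

theorem IsCover.sum_eq_dualObj (h : IsCover c f g) {x : Finset (α × β)} (hx : IsMatching x)
    (hxT : ∀ q ∈ x, Tight c f g q.1 q.2) (hfx : ∀ a, 0 < f a → a ∈ x.image Prod.fst)
    (hgx : ∀ b, 0 < g b → b ∈ x.image Prod.snd) : ∑ q ∈ x, c q.1 q.2 = DualObj f g := by
  refine (h.sum_le_dualObj hx).antisymm ?_
  rw [hx.sum_eq_of_tight hxT, DualObj, add_comm]
  exact add_le_add (sum_le_sum_of_pos_imp_mem h.1 fun a _ => hfx a)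
    (sum_le_sum_of_pos_imp_mem h.2.1 fun b _ => hgx b)

theorem IsPriceMaxMinCover.exists_matching_mem (h : IsPriceMaxMinCover c f g)
    {x : Finset (α × β)} (hx : IsMatching x) (hxT : ∀ q ∈ x, Tight c f g q.1 q.2)
    (hfx : ∀ a, 0 < f a → a ∈ x.image Prod.fst) (hgx : ∀ b, 0 < g b → b ∈ x.image Prod.snd)
    {i : α} (hi : i ∉ x.image Prod.fst) (j : β) :
    ∃ y, IsMatching y ∧ (i, j) ∈ y ∧ DualObj f g - g j + c i j ≤ ∑ q ∈ y, c q.1 q.2 := by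
  have hcover := h.isMinCover.isCover
  -- Rematch the agents of positive value inside the tight graph without item `j`; then `i`,
  -- whose value is `0`, is free to take `j`.
  let G : α → β → Prop := fun a b => Tight c f g a b ∧ b ≠ j
  have hHall : ∀ K ⊆ univ.filter (0 < f ·), #K ≤ #(nbhd G K) := fun K hK =>
    h.card_le_card_nbhd_ne (fun k hk => (mem_filter.1 (hK hk)).2) j
  obtain ⟨y, hy, hyG, hfy, hyx, hxy⟩ := exists_isMatching_cover hHall
    (hx.mono (filter_subset (·.2 ≠ j) x))
    fun q hq => ⟨hxT q (mem_filter.1 hq).1, (mem_filter.1 hq).2⟩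
  have hfi : f i = 0 := le_antisymm (not_lt.1 fun hpos => hi (hfx i hpos)) (hcover.1 i)
  have hiy : i ∉ y.image Prod.fst := fun hiy => by
    rcases mem_union.1 (hyx hiy) with hix | hiP
    · exact hi (image_subset_image (filter_subset _ _) hix)
    · simp [hfi] at hiP
  have hjy : j ∉ y.image Prod.snd := by
    simp only [mem_image, not_exists, not_and]
    exact fun q hq hqj => (hyG q hq).2 hqj
  refine ⟨insert (i, j) y, hy.insert hiy hjy, mem_insert_self _ _, ?_⟩
  rw [sum_insert fun hij => hiy (mem_image_of_mem Prod.fst hij),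
    hy.sum_eq_of_tight fun q hq => (hyG q hq).1]
  have hf : ∑ a, f a ≤ ∑ a ∈ y.image Prod.fst, f a :=
    sum_le_sum_of_pos_imp_mem hcover.1 fun a _ ha => hfy (by simpa using ha)
  have hg : ∑ b ∈ univ.erase j, g b ≤ ∑ b ∈ y.image Prod.snd, g b := by
    refine sum_le_sum_of_pos_imp_mem hcover.2.1 fun b hb hpos => hxy ?_
    obtain ⟨q, hq, rfl⟩ := mem_image.1 (hgx b hpos)
    exact mem_image_of_mem _ (mem_filter.2 ⟨hq, ne_of_mem_erase hb⟩)
  rw [sum_erase_eq_sub (mem_univ j)] at hg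
  simp only [DualObj] at *
  linarith

end Duality

section Lattice

variable {α β : Type*} [Fintype α] [Fintype β] {c : α → β → ℝ} {f f' : α → ℝ} {g g' : β → ℝ}

omit [Fintype α] [Fintype β] in
theorem IsCover.inf_sup (h : IsCover c f g) (h' : IsCover c f' g') :
    IsCover c (f ⊓ f') (g ⊔ g') := by
  refine ⟨fun a => le_inf (h.1 a) (h'.1 a), fun b => (h.2.1 b).trans le_sup_left, fun a b => ?_⟩
  simp only [Pi.inf_apply, Pi.sup_apply]
  rcases le_total (f a) (f' a) with ha | ha
  · rw [inf_eq_left.2 ha]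
    exact (h.2.2 a b).trans (add_le_add_right le_sup_left _)
  · rw [inf_eq_right.2 ha]
    exact (h'.2.2 a b).trans (add_le_add_right le_sup_right _)

omit [Fintype α] [Fintype β] in
theorem IsCover.sup_inf (h : IsCover c f g) (h' : IsCover c f' g') :
    IsCover c (f ⊔ f') (g ⊓ g') :=
  (h.swap.inf_sup h'.swap).swap

theorem dualObj_inf_sup_add_dualObj_sup_inf :
    DualObj (f ⊓ f') (g ⊔ g') + DualObj (f ⊔ f') (g ⊓ g') = DualObj f g + DualObj f' g' := by
  have hf : ∑ a, (f ⊓ f') a + ∑ a, (f ⊔ f') a = ∑ a, f a + ∑ a, f' a := by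
    rw [← sum_add_distrib, ← sum_add_distrib]
    exact sum_congr rfl fun a _ => inf_add_sup (f a) (f' a)
  have hg : ∑ b, (g ⊔ g') b + ∑ b, (g ⊓ g') b = ∑ b, g b + ∑ b, g' b := by
    rw [← sum_add_distrib, ← sum_add_distrib]
    exact sum_congr rfl fun b _ => (add_comm _ _).trans (inf_add_sup (g b) (g' b))
  simp only [DualObj]
  linarith

/-- `(f ⊓ f', g ⊔ g')` is again a minimum cover. -/
theorem IsPriceMaxMinCover.le_of_isMinCover (h : IsPriceMaxMinCover c f g)
    (h' : IsMinCover c f' g') : f ≤ f' ∧ g' ≤ g := by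
  have hinf := h.isMinCover.isCover.inf_sup h'.isCover
  have hle : DualObj (f ⊓ f') (g ⊔ g') ≤ DualObj f g := by
    have := h'.2 _ _ (h.isMinCover.isCover.sup_inf h'.isCover)
    have := h.isMinCover.2 _ _ h'.isCover
    linarith [dualObj_inf_sup_add_dualObj_sup_inf (f := f) (f' := f') (g := g) (g' := g')]
  have hg : ∑ b, (g ⊔ g') b ≤ ∑ b, g b :=
    h.2 _ _ ⟨hinf, fun f'' g'' h'' => hle.trans (h.isMinCover.2 f'' g'' h'')⟩
  refine ⟨fun a => ?_, fun b => ?_⟩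
  · by_contra ha
    have : ∑ a, (f ⊓ f') a < ∑ a, f a :=
      sum_lt_sum (fun a _ => inf_le_left) ⟨a, mem_univ a, inf_lt_left.2 ha⟩
    have := h.isMinCover.2 _ _ hinf
    simp only [DualObj] at this
    linarith
  · by_contra hb
    have : ∑ b, g b < ∑ b, (g ⊔ g') b :=
      sum_lt_sum (fun b _ => le_sup_left) ⟨b, mem_univ b, lt_sup_iff.2 (Or.inr (not_le.1 hb))⟩
    linarith

end Lattice

section Existence

variable {α β : Type*} [Fintype α] [Fintype β]

theorem isCompact_setOf_isCover_dualObj_le (c : α → β → ℝ) (z : ℝ) :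
    IsCompact {q : (α → ℝ) × (β → ℝ) | IsCover c q.1 q.2 ∧ DualObj q.1 q.2 ≤ z} := by
  refine isCompact_Icc (a := 0) (b := (fun _ => z, fun _ => z)) |>.of_isClosed_subset ?_ ?_
  · simp only [IsCover, DualObj, Set.ofPred_and, Set.ofPred_forall]
    repeat' first
      | apply IsClosed.inter
      | (apply isClosed_iInter; intro)
      | (apply isClosed_le <;> fun_prop)
  · rintro q ⟨hc, hz⟩
    have hf : 0 ≤ ∑ a, q.1 a := sum_nonneg fun a _ => hc.1 a
    have hg : 0 ≤ ∑ b, q.2 b := sum_nonneg fun b _ => hc.2.1 b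
    simp only [DualObj] at hz
    refine ⟨⟨hc.1, hc.2.1⟩, fun a => ?_, fun b => ?_⟩
    · linarith [single_le_sum (fun a _ => hc.1 a) (mem_univ a)]
    · linarith [single_le_sum (fun b _ => hc.2.1 b) (mem_univ b)]

theorem exists_isPriceMaxMinCover (c : α → β → ℝ) : ∃ f g, IsPriceMaxMinCover c f g := by
  have hcont : Continuous fun q : (α → ℝ) × (β → ℝ) => DualObj q.1 q.2 := by
    unfold DualObj; fun_prop
  set q₀ : (α → ℝ) × (β → ℝ) := (fun a => ∑ b, |c a b|, 0)
  have h₀ : IsCover c q₀.1 q₀.2 := by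
    refine ⟨fun a => sum_nonneg fun b _ => abs_nonneg _, fun _ => le_rfl, fun a b => ?_⟩
    simpa [q₀] using (le_abs_self (c a b)).trans
      (single_le_sum (fun b _ => abs_nonneg (c a b)) (mem_univ b))
  obtain ⟨qm, ⟨hqm, -⟩, hmin⟩ :=
    (isCompact_setOf_isCover_dualObj_le c (DualObj q₀.1 q₀.2)).exists_isMinOn
      ⟨q₀, h₀, le_rfl⟩ hcont.continuousOn
  have hqmin : IsMinCover c qm.1 qm.2 := ⟨hqm, fun f g hfg => by
    by_cases hle : DualObj f g ≤ DualObj q₀.1 q₀.2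
    · exact isMinOn_iff.1 hmin (f, g) ⟨hfg, hle⟩
    · exact (isMinOn_iff.1 hmin q₀ ⟨h₀, le_rfl⟩).trans (not_le.1 hle).le⟩
  obtain ⟨qo, ⟨hqo, hqo_le⟩, hmax⟩ :=
    (isCompact_setOf_isCover_dualObj_le c (DualObj qm.1 qm.2)).exists_isMaxOn ⟨qm, hqm, le_rfl⟩
      (f := fun q => ∑ b, q.2 b) (by fun_prop)
  have hqomin : IsMinCover c qo.1 qo.2 := ⟨hqo, fun f g hfg => hqo_le.trans (hqmin.2 f g hfg)⟩
  exact ⟨qo.1, qo.2, hqomin, fun f g hfg => isMaxOn_iff.1 hmax (f, g) ⟨hfg.1, hfg.2 _ _ hqm⟩⟩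

end Existence

section AssignmentGame

variable [Fintype N] [Fintype M] {b : N → M → ℝ} {π μ : N → ℝ} {p : M → ℝ}

theorem _root_.DualFeasible.isCover (h : DualFeasible b π μ p) : IsCover b π p :=
  ⟨h.1, h.2.2.1, fun i j => by linarith [h.2.2.2 i j, h.2.1 i]⟩

theorem IsCover.dualFeasible (h : IsCover b π p) : DualFeasible b π 0 p :=
  ⟨h.1, fun _ => le_rfl, h.2.1, fun i j => by simpa using h.2.2 i j⟩

theorem _root_.DualOptimal.isMinCover (h : DualOptimal b π μ p) : IsMinCover b π p :=
  ⟨h.1.isCover, fun π' p' h' => h.2 π' 0 p' h'.dualFeasible⟩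

variable [DecidableEq N] {S T : Finset N} {r : ℝ}

theorem exists_aval (b : N → M → ℝ) (S T : Finset N)
    (hT : ∃ x : Finset (N × M), IsMatching x ∧ (∀ q ∈ x, q.1 ∈ S ∪ T) ∧ ∀ i ∈ T, ∃ j, (i, j) ∈ x) :
    ∃ r, AVal b S T r := by
  obtain ⟨x, hx, hmax⟩ := Set.exists_max_image _ (fun x => ∑ q ∈ x, b q.1 q.2)
    (Set.toFinite _) hT
  refine ⟨_, ⟨x, hx.1, hx.2.1, hx.2.2, rfl⟩, ?_⟩
  rintro r ⟨y, hy, hyS, hyT, rfl⟩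
  exact hmax y ⟨hy, hyS, hyT⟩

theorem exists_aval_univ_singleton [Nonempty M] (b : N → M → ℝ) (i : N) :
    ∃ r, AVal b univ {i} r := by
  obtain ⟨j⟩ := ‹Nonempty M›
  refine exists_aval b univ {i} ⟨{(i, j)}, by simp [isMatching_iff_injOn],
    fun _ _ => mem_union_left _ (mem_univ _), fun i' hi' => ⟨j, by simp [mem_singleton.1 hi']⟩⟩

theorem _root_.AVal.le_dualObj {f : N → ℝ} {g : M → ℝ} (h : AVal b S T r) (hc : IsCover b f g) :
    r ≤ DualObj f g := by
  obtain ⟨x, hx, -, -, rfl⟩ := h.1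
  exact hc.sum_le_dualObj hx

omit [Fintype M] in
theorem _root_.AVal.sum_le (h : AVal b univ T r) {x : Finset (N × M)} (hx : IsMatching x)
    (hT : ∀ i ∈ T, ∃ j, (i, j) ∈ x) : ∑ q ∈ x, b q.1 q.2 ≤ r :=
  h.2 ⟨x, hx, fun _ _ => mem_union_left _ (mem_univ _), hT, rfl⟩

theorem IsMinCover.aval_univ_empty {f : N → ℝ} {g : M → ℝ} (h : IsMinCover b f g) :
    AVal b univ ∅ (DualObj f g) := by
  classical
  obtain ⟨x, hx, hxT, hfx, hgx⟩ := h.exists_tight_cover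
  refine ⟨⟨x, hx, fun _ _ => mem_union_left _ (mem_univ _), by simp,
    (h.isCover.sum_eq_dualObj hx hxT hfx hgx).symm⟩, ?_⟩
  rintro r ⟨y, hy, -, -, rfl⟩
  exact h.isCover.sum_le_dualObj hy

theorem _root_.DualFeasible.aval_add_le {i : N} (h : DualFeasible b π μ p)
    (hr : AVal b univ {i} r) : r + μ i ≤ DualObj π p := by
  obtain ⟨y, hy, -, hyi, rfl⟩ := hr.1
  obtain ⟨j, hij⟩ := hyi i (mem_singleton_self i)
  calc ∑ q ∈ y, b q.1 q.2 + μ i ≤ ∑ q ∈ y, (b q.1 q.2 + μ q.1) := by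
        rw [sum_add_distrib]
        gcongr
        exact single_le_sum (f := fun q : N × M => μ q.1) (fun q _ => h.2.1 q.1) hij
    _ ≤ ∑ q ∈ y, (π q.1 + p q.2) := sum_le_sum fun q _ => by linarith [h.2.2.2 q.1 q.2]
    _ ≤ DualObj π p := sum_add_le_dualObj h.1 h.2.2.1 hy

/-- The VCG raise `V_ℓ(N) - V_ℓ(N \ {i})` keeps the price-maximal minimum cover feasible. -/
theorem IsPriceMaxMinCover.sub_le_sub_raise {f : N → ℝ} {g : M → ℝ} {i : N}
    (h : IsPriceMaxMinCover b f g) (hr : AVal b univ {i} r) (j : M) :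
    b i j - g j ≤ f i - (DualObj f g - r) := by
  classical
  have hc := h.isMinCover.isCover
  obtain ⟨x, hx, hxT, hfx, hgx⟩ := h.isMinCover.exists_tight_cover
  by_cases hi : i ∈ x.image Prod.fst
  · have := hr.sum_le hx fun i' hi' => by
      obtain ⟨q, hq, rfl⟩ := mem_image.1 (mem_singleton.1 hi' ▸ hi)
      exact ⟨q.2, hq⟩
    rw [hc.sum_eq_dualObj hx hxT hfx hgx] at this
    linarith [hc.2.2 i j]
  · obtain ⟨y, hy, hij, hval⟩ := h.exists_matching_mem hx hxT hfx hgx hi j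
    have := hr.sum_le hy fun i' hi' => ⟨j, mem_singleton.1 hi' ▸ hij⟩
    linarith [hc.1 i]

end AssignmentGame

end Assignment

theorem stmt18_general [Fintype N] [DecidableEq N] [Fintype M] [Nonempty M]
    (b : N → M → ℝ) :
    ∃ (π' μ' : N → ℝ) (p' : M → ℝ),
      DualOptimal b π' μ' p' ∧
      (∀ π μ p, DualOptimal b π μ p →
        (∀ i, π' i ≤ π i) ∧ (∀ i, μ i ≤ μ' i) ∧ (∀ j, p j ≤ p' j)) ∧
      ∀ (i : N) (rN ri : ℝ), AVal b univ ∅ rN → AVal b univ {i} ri →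
        μ' i = rN - ri := by
  obtain ⟨π₀, p₀, h⟩ := Assignment.exists_isPriceMaxMinCover b
  have hc := h.isMinCover.isCover
  choose v hv using Assignment.exists_aval_univ_singleton b
  have hopt₀ : DualOptimal b π₀ (fun i => DualObj π₀ p₀ - v i) p₀ :=
    ⟨⟨hc.1, fun i => sub_nonneg.2 ((hv i).le_dualObj hc), hc.2.1,
        fun i j => h.sub_le_sub_raise (hv i) j⟩,
      fun π' _ p' h' => h.isMinCover.2 π' p' h'.isCover⟩
  refine ⟨π₀, _, p₀, hopt₀, fun π μ p hopt => ?_, fun i rN ri hrN hri => ?_⟩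
  · obtain ⟨hπ, hp⟩ := h.le_of_isMinCover hopt.isMinCover
    refine ⟨hπ, fun i => ?_, hp⟩
    have := hopt.1.aval_add_le (hv i)
    have := hopt.2 π₀ 0 p₀ hc.dualFeasible
    linarith
  · obtain rfl := h.isMinCover.aval_univ_empty.unique hrN
    obtain rfl := (hv i).unique hri
    rfl

/-- there is an optimal dual solution that is the largest element of the
lattice of optimal dual solutions (smallest discounts, largest raises and prices), and at
this solution each `μ i` equals agent `i`'s VCG raise `V_ℓ(N) - V_ℓ(N \ {i})`,
where `V_ℓ(N) = V(N, ∅)` and `V_ℓ(N \ {i}) = V(N, {i})`. -/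
theorem stmt18 [Fintype N] [DecidableEq N] [Fintype M] [Nonempty M]
    (hmn : Fintype.card M ≤ Fintype.card N)
    (b : N → M → ℝ) (hb : ∀ i j, 0 ≤ b i j) :
    ∃ (π' μ' : N → ℝ) (p' : M → ℝ),
      DualOptimal b π' μ' p' ∧
      (∀ π μ p, DualOptimal b π μ p →
        (∀ i, π' i ≤ π i) ∧ (∀ i, μ i ≤ μ' i) ∧ (∀ j, p j ≤ p' j)) ∧
      ∀ (i : N) (rN ri : ℝ), AVal b univ ∅ rN → AVal b univ {i} ri →
        μ' i = rN - ri :=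
  stmt18_general b
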